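/- For all real 0 < α < 1 and θ > 0, the defect d^sym(1,3) of the symmetrized (α, θ) splitting rule vanishes if and only if θ = 1−α or θ = 2−α. -/

import Mathlib

/-- Rising factorial `[x]_j = x (x+1) ⋯ (x+j-1)`, with `[x]_0 = 1`. -/
noncomputable def risingFactorial (x : ℝ) : ℕ → ℝ
  | 0 => 1
  | n + 1 => risingFactorial x n * (x + n)

/-- The decrement matrix
`q_{α,θ}(n, m) = C(n,m) · ((n−m)α + mθ)/n · [1−α]_{m−1} / [n−m+θ]_m` for `1 ≤ m ≤ n`,
and `q_{α,θ}(n, m) = 0` otherwise. -/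
noncomputable def decrementMatrix (α θ : ℝ) (n m : ℕ) : ℝ :=
  if 1 ≤ m ∧ m ≤ n then
    (n.choose m : ℝ) * ((((n : ℝ) - m) * α + m * θ) / n) *
      risingFactorial (1 - α) (m - 1) / risingFactorial ((n : ℝ) - m + θ) m
  else 0

/-- `q^bias(x, y) = q_{α,θ}(x+y−1, x)`. -/
noncomputable def qBias (α θ : ℝ) (x y : ℕ) : ℝ := decrementMatrix α θ (x + y - 1) x

/-- The symmetrization `q^sym(x, y) = (q^bias(x,y) + q^bias(y,x))/2`. -/
noncomputable def qSym (α θ : ℝ) (x y : ℕ) : ℝ := (qBias α θ x y + qBias α θ y x) / 2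

/-- The sampling-consistency defect
`d^sym(x, y) = q^sym(x,y)·(1 − (q^sym(1, x+y) + q^sym(x+y, 1))/(x+y+1))
  − q^sym(x+1, y)·(x+1)/(x+y+1) − q^sym(x, y+1)·(y+1)/(x+y+1)`. -/
noncomputable def dSym (α θ : ℝ) (x y : ℕ) : ℝ :=
  qSym α θ x y * (1 - (qSym α θ 1 (x + y) + qSym α θ (x + y) 1) / ((x : ℝ) + y + 1))
    - qSym α θ (x + 1) y * ((x : ℝ) + 1) / ((x : ℝ) + y + 1)
    - qSym α θ x (y + 1) * ((y : ℝ) + 1) / ((x : ℝ) + y + 1)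

/-!
Every entry of `q^sym` entering `d^sym(1,3)` is an explicit rational function of `α` and `θ`, and
clearing denominators factors the defect as
`(θ + α - 1) (θ + α - 2) (1 - α) (θ² + 3θ + 3α - α²)` over a positive denominator. For
`0 < α < 1` and `θ > 0` the last two factors are positive, so only the first two can vanish.
-/

section Evaluations

variable (α θ : ℝ)

lemma qBias_one_left {y : ℕ} (hy : 1 ≤ y) :
    qBias α θ 1 y = (((y : ℝ) - 1) * α + θ) / ((y : ℝ) - 1 + θ) := by
  have hy' : (y : ℝ) ≠ 0 := by positivity
  rw [qBias, decrementMatrix, if_pos (by omega), Nat.add_sub_cancel_left]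
  simp only [Nat.choose_one_right, Nat.cast_one, one_mul, tsub_self, risingFactorial, mul_one,
    CharP.cast_eq_zero, add_zero]
  field_simp

lemma qBias_one_right {x : ℕ} (hx : 1 ≤ x) :
    qBias α θ x 1 = θ * risingFactorial (1 - α) (x - 1) / risingFactorial θ x := by
  have hx' : (x : ℝ) ≠ 0 := by positivity
  rw [qBias, decrementMatrix, if_pos (by omega), Nat.add_sub_cancel, Nat.choose_self]
  simp only [Nat.cast_one, sub_self, zero_mul, zero_add, one_mul, mul_div_cancel_left₀ _ hx']

lemma qBias_two_three : qBias α θ 2 3 = 3 * (α + θ) * (1 - α) / ((θ + 2) * (θ + 3)) := by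
  rw [qBias, decrementMatrix, if_pos (by norm_num)]
  norm_num [risingFactorial, Nat.choose]
  ring

lemma qBias_three_two :
    qBias α θ 3 2 = (α + 3 * θ) * (1 - α) * (2 - α) / ((θ + 1) * (θ + 2) * (θ + 3)) := by
  rw [qBias, decrementMatrix, if_pos (by norm_num)]
  norm_num [risingFactorial]
  field_simp
  ring

lemma dSym_one_three (hθ : 0 < θ) :
    dSym α θ 1 3 = (θ + α - 1) * (θ + α - 2) * ((1 - α) * (θ ^ 2 + 3 * θ + 3 * α - α ^ 2)) /
      (10 * (θ + 1) ^ 2 * (θ + 2) ^ 2 * (θ + 3)) := by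
  have h1 : θ + 1 ≠ 0 := by positivity
  have h2 : θ + 2 ≠ 0 := by positivity
  have h3 : θ + 3 ≠ 0 := by positivity
  simp only [dSym, qSym, Nat.reduceAdd, qBias_two_three, qBias_three_two,
    qBias_one_left α θ (by norm_num : 1 ≤ 3), qBias_one_left α θ (by norm_num : 1 ≤ 4),
    qBias_one_right α θ (by norm_num : 1 ≤ 3), qBias_one_right α θ (by norm_num : 1 ≤ 4)]
  norm_num [risingFactorial]
  field_simp
  ring

end Evaluations

/-- the defect `d^sym(1,3)` vanishes iff `θ = 1−α` or `θ = 2−α`. -/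
theorem dSym_one_three_eq_zero_iff (α θ : ℝ) (hα0 : 0 < α) (hα1 : α < 1) (hθ : 0 < θ) :
    dSym α θ 1 3 = 0 ↔ θ = 1 - α ∨ θ = 2 - α := by
  have hden : 10 * (θ + 1) ^ 2 * (θ + 2) ^ 2 * (θ + 3) ≠ 0 := by positivity
  have hfactor : 0 < (1 - α) * (θ ^ 2 + 3 * θ + 3 * α - α ^ 2) := by
    apply mul_pos <;> nlinarith
  rw [dSym_one_three α θ hθ, div_eq_zero_iff, or_iff_left hden, mul_eq_zero,
    or_iff_left hfactor.ne', mul_eq_zero, sub_eq_zero, sub_eq_zero, eq_sub_iff_add_eq,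
    eq_sub_iff_add_eq]
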